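/- arXiv:0802.2676 — 2 statements merged into one kernel-verified Lean document; each statement's English description precedes it below -/
import Mathlib

section
/- If A is symmetric positive definite and B is symmetric positive semidefinite with det(A + B) = det(A), then B = 0. -/
/-!
Write `A = Sᴴ S` with `S` invertible. Then `A + B = Sᴴ (1 + C) S` with `C = S⁻ᴴ B S⁻¹` positive
semidefinite, so `det (1 + C) = 1`. In an eigenbasis of `C` this reads `∏ (1 + λᵢ) = 1` with
`λᵢ ≥ 0`, and `1 + ∑ λᵢ ≤ ∏ (1 + λᵢ)` forces `trace C = ∑ λᵢ = 0`, hence `C = 0` and `B = 0`.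
-/

open Matrix

theorem Finset.one_add_sum_le_prod_one_add {ι R : Type*} [CommSemiring R] [PartialOrder R]
    [IsOrderedRing R] (s : Finset ι) {f : ι → R} (hf : ∀ i ∈ s, 0 ≤ f i) :
    1 + ∑ i ∈ s, f i ≤ ∏ i ∈ s, (1 + f i) := by
  induction s using Finset.cons_induction with
  | empty => simp
  | cons a s ha ih =>
    rw [Finset.forall_mem_cons] at hf
    rw [Finset.sum_cons, Finset.prod_cons]
    calc 1 + (f a + ∑ i ∈ s, f i)
        ≤ 1 + (f a + ∑ i ∈ s, f i) + f a * ∑ i ∈ s, f i :=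
          le_add_of_nonneg_right (mul_nonneg hf.1 (Finset.sum_nonneg hf.2))
      _ = (1 + f a) * (1 + ∑ i ∈ s, f i) := by ring
      _ ≤ (1 + f a) * ∏ i ∈ s, (1 + f i) := by
          gcongr
          · exact add_nonneg zero_le_one hf.1
          · exact ih hf.2

open scoped ComplexOrder MatrixOrder

namespace Matrix

variable {𝕜 n : Type*} [RCLike 𝕜] [Fintype n] [DecidableEq n] {C : Matrix n n 𝕜}

theorem IsHermitian.det_one_add (hC : C.IsHermitian) :
    det (1 + C) = ∏ i, (1 + (hC.eigenvalues i : 𝕜)) := by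
  conv_lhs => rw [hC.spectral_theorem, Unitary.conjStarAlgAut_apply, det_one_add_mul_comm,
    ← mul_assoc, Unitary.coe_star_mul_self, one_mul, ← diagonal_one, diagonal_add, det_diagonal]
  rfl

theorem PosSemidef.eq_zero_of_det_one_add_eq_one (hC : C.PosSemidef) (h : det (1 + C) = 1) :
    C = 0 := by
  have hprod : ∏ i, (1 + hC.isHermitian.eigenvalues i) = 1 := by
    rw [hC.isHermitian.det_one_add] at h
    exact_mod_cast h
  have hsum : ∑ i, hC.isHermitian.eigenvalues i = 0 := by
    refine le_antisymm ?_ (Finset.sum_nonneg fun i _ ↦ hC.eigenvalues_nonneg i)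
    linarith [Finset.one_add_sum_le_prod_one_add Finset.univ fun i _ ↦ hC.eigenvalues_nonneg i]
  rw [← hC.trace_eq_zero_iff, hC.isHermitian.trace_eq_sum_eigenvalues, ← RCLike.ofReal_sum,
    hsum, RCLike.ofReal_zero]

end Matrix

/-- If `A` is symmetric positive definite and `B` is symmetric positive semidefinite with
`det (A + B) = det A`, then `B = 0`. -/
theorem posSemidef_eq_zero_of_det_add_eq {d : ℕ} (A B : Matrix (Fin d) (Fin d) ℝ)
    (hA : A.PosDef) (hB : B.PosSemidef) (hdet : (A + B).det = A.det) : B = 0 := by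
  obtain ⟨S, hS, rfl⟩ : ∃ S, IsUnit S ∧ A = star S * S :=
    CStarAlgebra.isStrictlyPositive_iff_eq_star_mul_self.mp hA.isStrictlyPositive
  obtain ⟨C, rfl⟩ : ∃ C, B = star S * C * S := by
    lift S to (Matrix (Fin d) (Fin d) ℝ)ˣ using hS
    refine ⟨star S.inv * B * S.inv, ?_⟩
    rw [← mul_assoc, ← mul_assoc, ← star_mul, S.inv_val, star_one, one_mul, mul_assoc,
      S.inv_val, mul_one]
  have hC : C.PosSemidef := hS.posSemidef_star_left_conjugate_iff.mp hB
  have hfactor : star S * S + star S * C * S = star S * (1 + C) * S := by noncomm_ring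
  rw [hfactor, det_mul, det_mul, mul_right_comm, ← det_mul, mul_eq_left₀ hA.det_pos.ne'] at hdet
  rw [hC.eq_zero_of_det_one_add_eq_one hdet, mul_zero, zero_mul]
end

section
/- Under model identifiability (F_{w₁}(Z) = F_{w₂}(Z) almost surely implies w₁ = w₂), the function w ↦ log det Γ(w), where Γ(w) = E[(Y − F_w(Z))(Y − F_w(Z))ᵀ], attains its strict global minimum uniquely at w = w⁰, provided Γ₀ = Γ(w⁰) = E[εεᵀ] is positive definite. -/
/-!
Write `Y - F_w(Z) = ε + Δ_w` with `ε = Y - F_{w⁰}(Z)` and `Δ_w = F_{w⁰}(Z) - F_w(Z)`. Since `ε` is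
centred and independent of `Z`, the cross moments `E[ε_i Δ_{w,j}]` vanish, so
`Γ(w) = Γ₀ + E[Δ_w Δ_wᵀ]`. The second summand is a Gram matrix in `L²`, hence positive
semidefinite, and it is nonzero for `w ≠ w⁰` by identifiability. Adding a nonzero positive
semidefinite `B` to a positive definite `A` strictly increases the determinant: with `A⁻¹ = RᴴR`,
`det (A + B) = det A * det (1 + R B Rᴴ)`, and the last factor is a product of eigenvalues `1 + λᵢ`
with all `λᵢ ≥ 0` and some `λᵢ > 0`.
-/

open MeasureTheory ProbabilityTheory

namespace Matrix

section Det

variable {n : Type*} [Fintype n] [DecidableEq n]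

theorem one_lt_det_one_add {M : Matrix n n ℝ} (hM : M.PosSemidef) (hM0 : M ≠ 0) :
    1 < (1 + M).det := by
  have hdet : (1 + M).det = ∏ i, (1 + hM.isHermitian.eigenvalues i) := by
    have hcfc : 1 + M = cfc (fun x : ℝ => 1 + x) M := by
      rw [cfc_const_add 1 (fun x => x) M continuousOn_id hM.isHermitian.isSelfAdjoint,
        cfc_id' ℝ M hM.isHermitian.isSelfAdjoint, map_one]
    rw [hcfc, hM.isHermitian.cfc_eq]
    simp [IsHermitian.cfc, -Unitary.conjStarAlgAut_apply]
  obtain ⟨i, hi⟩ : ∃ i, hM.isHermitian.eigenvalues i ≠ 0 := by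
    by_contra! h
    exact hM0 (hM.isHermitian.eigenvalues_eq_zero_iff.mp (funext h))
  rw [hdet]
  calc (1 : ℝ) = ∏ _j : n, 1 := Finset.prod_const_one.symm
  _ < _ := by
    refine Finset.prod_lt_prod (fun _ _ => one_pos) (fun j _ => ?_) ⟨i, Finset.mem_univ i, ?_⟩
    · linarith [hM.eigenvalues_nonneg j]
    · linarith [lt_of_le_of_ne (hM.eigenvalues_nonneg i) hi.symm]

open scoped MatrixOrder in
theorem PosDef.det_lt_det_add {A B : Matrix n n ℝ} (hA : A.PosDef) (hB : B.PosSemidef)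
    (hB0 : B ≠ 0) : A.det < (A + B).det := by
  have hAu : IsUnit A.det := hA.det_pos.ne'.isUnit
  obtain ⟨R, hR⟩ := CStarAlgebra.nonneg_iff_eq_star_mul_self.mp hA.inv.posSemidef.nonneg
  have hdet : (A + B).det = A.det * (1 + R * B * Rᴴ).det := by
    rw [← Matrix.mul_one B, det_add_mul B 1 hAu, hR, Matrix.one_mul, star_eq_conjTranspose,
      Matrix.mul_assoc, det_one_add_mul_comm, Matrix.mul_one, Matrix.mul_assoc]
  have hM0 : R * B * Rᴴ ≠ 0 := by
    intro h
    apply hB0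
    have hAinv : A⁻¹ * B * A⁻¹ = 0 := by
      rw [hR, star_eq_conjTranspose]
      calc Rᴴ * R * B * (Rᴴ * R) = Rᴴ * (R * B * Rᴴ) * R := by simp only [Matrix.mul_assoc]
        _ = 0 := by rw [h, Matrix.mul_zero, Matrix.zero_mul]
    calc B = A * (A⁻¹ * B * A⁻¹) * A := by
          rw [← Matrix.mul_assoc, ← Matrix.mul_assoc, mul_nonsing_inv A hAu, Matrix.one_mul,
            Matrix.mul_assoc, nonsing_inv_mul A hAu, Matrix.mul_one]
      _ = 0 := by rw [hAinv, Matrix.mul_zero, Matrix.zero_mul]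
  rw [hdet]
  exact lt_mul_of_one_lt_right hA.det_pos
    (one_lt_det_one_add (hB.mul_mul_conjTranspose_same R) hM0)


end Det

section Gram

variable {𝕜 E n : Type*} [RCLike 𝕜] [NormedAddCommGroup E] [InnerProductSpace 𝕜 E]

theorem gram_add_of_inner_eq_zero {u v : n → E} (h : ∀ i j, inner 𝕜 (u i) (v j) = 0) :
    gram 𝕜 (u + v) = gram 𝕜 u + gram 𝕜 v := by
  ext i j
  simp [gram_apply, inner_add_left, inner_add_right, h, inner_eq_zero_symm.mp (h j i)]

theorem gram_eq_zero_iff {v : n → E} : gram 𝕜 v = 0 ↔ v = 0 := by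
  refine ⟨fun h => funext fun i => (inner_self_eq_zero (𝕜 := 𝕜)).mp ?_, fun h => h ▸ gram_zero⟩
  simpa [gram_apply] using congrFun₂ h i i


end Gram

end Matrix

namespace MeasureTheory

variable {Ω ι : Type*} [MeasurableSpace Ω] {P : Measure Ω}

noncomputable def secondMomentMatrix (P : Measure Ω) (X : Ω → ι → ℝ) : Matrix ι ι ℝ :=
  Matrix.of fun i j => ∫ ω, X ω i * X ω j ∂P

theorem MemLp.integral_mul_eq_inner_toLp {f g : Ω → ℝ} (hf : MemLp f 2 P) (hg : MemLp g 2 P) :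
    ∫ ω, f ω * g ω ∂P = inner ℝ (hf.toLp f) (hg.toLp g) := by
  rw [L2.inner_def]
  refine integral_congr_ae ?_
  filter_upwards [hf.coeFn_toLp, hg.coeFn_toLp] with ω hfω hgω
  simp [hfω, hgω, mul_comm]

variable [Fintype ι] {X Y : Ω → ι → ℝ}

theorem secondMomentMatrix_eq_gram (hX : MemLp X 2 P) :
    secondMomentMatrix P X = Matrix.gram ℝ fun i => (hX.eval i).toLp (X · i) :=
  Matrix.ext fun i j => MemLp.integral_mul_eq_inner_toLp (hX.eval i) (hX.eval j)

theorem MemLp.posSemidef_secondMomentMatrix (hX : MemLp X 2 P) :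
    (secondMomentMatrix P X).PosSemidef := by
  rw [secondMomentMatrix_eq_gram hX]
  exact Matrix.posSemidef_gram ℝ _

theorem MemLp.secondMomentMatrix_eq_zero_iff (hX : MemLp X 2 P) :
    secondMomentMatrix P X = 0 ↔ X =ᵐ[P] 0 := by
  have hcoe (i : ι) : (hX.eval i).toLp (X · i) =ᵐ[P] 0 ↔ (X · i) =ᵐ[P] 0 :=
    (hX.eval i).coeFn_toLp.congr_left
  simp only [secondMomentMatrix_eq_gram hX, Matrix.gram_eq_zero_iff, funext_iff, Pi.zero_apply,
    Lp.eq_zero_iff_ae_eq_zero, hcoe]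
  simp only [Filter.EventuallyEq, ← Filter.eventually_all, funext_iff, Pi.zero_apply]

theorem secondMomentMatrix_add (hX : MemLp X 2 P) (hY : MemLp Y 2 P)
    (horth : ∀ i j, ∫ ω, X ω i * Y ω j ∂P = 0) :
    secondMomentMatrix P (X + Y) = secondMomentMatrix P X + secondMomentMatrix P Y := by
  rw [secondMomentMatrix_eq_gram hX, secondMomentMatrix_eq_gram hY,
    secondMomentMatrix_eq_gram (hX.add hY), ← Matrix.gram_add_of_inner_eq_zero]
  · exact congrArg _ (funext fun i => MemLp.toLp_add (hX.eval i) (hY.eval i))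
  · intro i j
    rw [← MemLp.integral_mul_eq_inner_toLp, horth]

end MeasureTheory

theorem ProbabilityTheory.IndepFun.integral_eval_mul_comp_eq_zero {Ω β ι : Type*}
    [MeasurableSpace Ω] [MeasurableSpace β] {P : Measure Ω} [Fintype ι] {ε : Ω → ι → ℝ} {Z : Ω → β}
    (hind : IndepFun ε Z P) (hε : Integrable ε P) (hcent : ∫ ω, ε ω ∂P = 0) {g : β → ℝ}
    (hg : Measurable g) (hgZ : AEStronglyMeasurable (fun ω => g (Z ω)) P) (i : ι) :
    ∫ ω, ε ω i * g (Z ω) ∂P = 0 := by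
  have hind_i : IndepFun (fun ω => ε ω i) (fun ω => g (Z ω)) P :=
    hind.comp (measurable_pi_apply i) hg
  rw [hind_i.integral_fun_mul_eq_mul_integral (hε.eval i).aestronglyMeasurable hgZ,
    ← eval_integral hε.eval, hcent, Pi.zero_apply, zero_mul]

theorem log_det_cov_unique_min_general {Ω : Type*} [MeasureSpace Ω]
    (P : Measure Ω) [IsProbabilityMeasure P] {d d' K : ℕ}
    (W : Set (Fin K → ℝ)) (w0 : Fin K → ℝ) (hw0 : w0 ∈ W)
    (F : (Fin K → ℝ) → (Fin d' → ℝ) → Fin d → ℝ)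
    (hFmeas : ∀ w, Measurable (F w))
    (Y : Ω → Fin d → ℝ) (Z : Ω → Fin d' → ℝ)
    (hYL2 : MemLp Y 2 P) (hFL2 : ∀ w ∈ W, MemLp (fun ω => F w (Z ω)) 2 P)
    -- the noise ε = Y − F_{w⁰}(Z) is centered and independent of Z
    (hcent : ∫ ω, (Y ω - F w0 (Z ω)) ∂P = 0)
    (hindep : IndepFun (fun ω => Y ω - F w0 (Z ω)) Z P)
    -- Γ(w) and the identifiability assumption
    (Γ : (Fin K → ℝ) → Matrix (Fin d) (Fin d) ℝ)
    (hΓ : ∀ w, Γ w = Matrix.of fun i j =>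
      ∫ ω, (Y ω i - F w (Z ω) i) * (Y ω j - F w (Z ω) j) ∂P)
    (hident : ∀ w1 ∈ W, ∀ w2 ∈ W,
      (∀ᵐ ω ∂P, F w1 (Z ω) = F w2 (Z ω)) → w1 = w2)
    (hΓ0 : (Γ w0).PosDef) :
    ∀ w ∈ W, w ≠ w0 → Real.log (Γ w0).det < Real.log (Γ w).det := by
  intro w hw hne
  set ε : Ω → Fin d → ℝ := fun ω => Y ω - F w0 (Z ω)
  set Δ : Ω → Fin d → ℝ := fun ω => F w0 (Z ω) - F w (Z ω)
  have hε : MemLp ε 2 P := hYL2.sub (hFL2 w0 hw0)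
  have hΔ : MemLp Δ 2 P := (hFL2 w0 hw0).sub (hFL2 w hw)
  have horth (i j : Fin d) : ∫ ω, ε ω i * Δ ω j ∂P = 0 :=
    hindep.integral_eval_mul_comp_eq_zero (hε.integrable one_le_two) hcent
      (((measurable_pi_apply j).comp (hFmeas w0)).sub ((measurable_pi_apply j).comp (hFmeas w)))
      (hΔ.eval j).aestronglyMeasurable i
  have hΓ' (v : Fin K → ℝ) : Γ v = secondMomentMatrix P fun ω => Y ω - F v (Z ω) := hΓ v
  have hres : (fun ω => Y ω - F w (Z ω)) = ε + Δ :=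
    funext fun ω => (sub_add_sub_cancel _ _ _).symm
  have hΓw : Γ w = Γ w0 + secondMomentMatrix P Δ := by
    rw [hΓ' w, hΓ' w0, hres, secondMomentMatrix_add hε hΔ horth]
  have hΔ0 : ¬ Δ =ᵐ[P] 0 := fun h =>
    hne (hident w hw w0 hw0 (h.mono fun ω hω => (sub_eq_zero.mp hω).symm))
  rw [hΓw]
  exact Real.log_lt_log hΓ0.det_pos (hΓ0.det_lt_det_add hΔ.posSemidef_secondMomentMatrix
    (mt hΔ.secondMomentMatrix_eq_zero_iff.mp hΔ0))

/-- Lemma 1: under identifiability, the function `w ↦ log det Γ(w)`, with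
`Γ(w) = E[(Y − F_w(Z))(Y − F_w(Z))ᵀ]`, attains its strict global minimum uniquely at
`w = w⁰`, provided `Γ₀ = Γ(w⁰)` is positive definite. -/
theorem log_det_cov_unique_min {Ω : Type*} [MeasureSpace Ω]
    (P : Measure Ω) [IsProbabilityMeasure P] {d d' K : ℕ}
    (W : Set (Fin K → ℝ)) (w0 : Fin K → ℝ) (hw0 : w0 ∈ W)
    (F : (Fin K → ℝ) → (Fin d' → ℝ) → Fin d → ℝ)
    (hFmeas : ∀ w, Measurable (F w))
    (Y : Ω → Fin d → ℝ) (Z : Ω → Fin d' → ℝ) (hY : Measurable Y) (hZ : Measurable Z)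
    (hYL2 : MemLp Y 2 P) (hFL2 : ∀ w ∈ W, MemLp (fun ω => F w (Z ω)) 2 P)
    -- the noise ε = Y − F_{w⁰}(Z) is centered and independent of Z
    (hcent : ∫ ω, (Y ω - F w0 (Z ω)) ∂P = 0)
    (hindep : IndepFun (fun ω => Y ω - F w0 (Z ω)) Z P)
    -- Γ(w) and the identifiability assumption
    (Γ : (Fin K → ℝ) → Matrix (Fin d) (Fin d) ℝ)
    (hΓ : ∀ w, Γ w = Matrix.of fun i j =>
      ∫ ω, (Y ω i - F w (Z ω) i) * (Y ω j - F w (Z ω) j) ∂P)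
    (hident : ∀ w1 ∈ W, ∀ w2 ∈ W,
      (∀ᵐ ω ∂P, F w1 (Z ω) = F w2 (Z ω)) → w1 = w2)
    (hΓ0 : (Γ w0).PosDef) :
    ∀ w ∈ W, w ≠ w0 → Real.log (Γ w0).det < Real.log (Γ w).det :=
  log_det_cov_unique_min_general P W w0 hw0 F hFmeas Y Z hYL2 hFL2 hcent hindep Γ hΓ hident hΓ0
end
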